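/- arXiv:2205.02325 — 2 statements merged into one kernel-verified Lean document; each statement's English description precedes it below -/
import Mathlib

section
/- Let 1 < α ≤ 2, 0 ≤ β ≤ α - 1, a < b. For every t ∈ [a,b], ((t-a)^(α-1)/Γ(α+1)) · (α/(α-β)·(b-a) - (t-a)) ≤ (α-1)^(α-1)/((α-β)^α Γ(α+1)) · (b-a)^α. -/
/-!
The function `x ↦ x ^ p * (M - x)` on `[0, M]` is maximal at `x = p M / (p + 1)`; the bound at
the maximum is weighted AM-GM for `x / p` and `M - x` with weights `p / (p + 1)` and `1 / (p + 1)`.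
With `p = α - 1` and `M = α (b - a) / (α - β)` this is the claimed estimate, up to the factor
`1 / Γ(α + 1)`.
-/

open Real

theorem Real.rpow_mul_le_rpow_add {p x y : ℝ} (hp : 0 < p) (hx : 0 ≤ x) (hy : 0 ≤ y) :
    x ^ p * y ≤ p ^ p / (p + 1) ^ (p + 1) * (x + y) ^ (p + 1) := by
  have hq : 0 < p + 1 := by linarith
  have amgm : (x / p) ^ (p / (p + 1)) * y ^ (1 / (p + 1)) ≤ (x + y) / (p + 1) := by
    have := geom_mean_le_arith_mean2_weighted (by positivity) (by positivity)
      (div_nonneg hx hp.le) hy (by field_simp : p / (p + 1) + 1 / (p + 1) = 1)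
    convert this using 1
    field_simp
  have hpow := rpow_le_rpow (by positivity) amgm hq.le
  rw [mul_rpow (by positivity) (by positivity), ← rpow_mul (div_nonneg hx hp.le),
    ← rpow_mul hy, div_mul_cancel₀ _ hq.ne', one_div_mul_cancel hq.ne', rpow_one,
    div_rpow hx hp.le, div_rpow (by positivity) hq.le] at hpow
  have hpp : 0 < p ^ p := rpow_pos_of_pos hp p
  have hqq : 0 < (p + 1) ^ (p + 1) := rpow_pos_of_pos hq _
  calc x ^ p * y = p ^ p * (x ^ p / p ^ p * y) := by field_simp
    _ ≤ p ^ p * ((x + y) ^ (p + 1) / (p + 1) ^ (p + 1)) := by gcongr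
    _ = p ^ p / (p + 1) ^ (p + 1) * (x + y) ^ (p + 1) := by ring

theorem Real.rpow_mul_sub_le {p x M : ℝ} (hp : 0 < p) (hx : 0 ≤ x) (hM : 0 ≤ M) :
    x ^ p * (M - x) ≤ p ^ p / (p + 1) ^ (p + 1) * M ^ (p + 1) := by
  rcases le_total x M with hxM | hMx
  · simpa using rpow_mul_le_rpow_add hp hx (sub_nonneg.2 hxM)
  · calc x ^ p * (M - x) ≤ 0 :=
          mul_nonpos_of_nonneg_of_nonpos (rpow_nonneg hx p) (sub_nonpos.2 hMx)
      _ ≤ p ^ p / (p + 1) ^ (p + 1) * M ^ (p + 1) := by positivity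

theorem stmt_8_general (α β a b : ℝ) (hα : 1 < α) (hβα : β ≤ α - 1) :
    ∀ t ∈ Set.Icc a b,
      (t - a) ^ (α - 1) / Real.Gamma (α + 1) *
          (α / (α - β) * (b - a) - (t - a)) ≤
        (α - 1) ^ (α - 1) / ((α - β) ^ α * Real.Gamma (α + 1)) *
          (b - a) ^ α := by
  rintro t ⟨hat, htb⟩
  have hαβ : 0 < α - β := by linarith
  have hΓ : 0 < Gamma (α + 1) := Gamma_pos_of_pos (by linarith)
  have key := rpow_mul_sub_le (sub_pos.2 hα) (sub_nonneg.2 hat)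
    (M := α / (α - β) * (b - a)) (by have := sub_nonneg.2 (hat.trans htb); positivity)
  rw [sub_add_cancel, mul_rpow (by positivity) (by linarith), div_rpow (by positivity) hαβ.le]
    at key
  have hαα : 0 < α ^ α := rpow_pos_of_pos (by linarith) α
  calc (t - a) ^ (α - 1) / Gamma (α + 1) * (α / (α - β) * (b - a) - (t - a))
      = (t - a) ^ (α - 1) * (α / (α - β) * (b - a) - (t - a)) / Gamma (α + 1) := by ring
    _ ≤ (α - 1) ^ (α - 1) / α ^ α * (α ^ α / (α - β) ^ α * (b - a) ^ α) / Gamma (α + 1) := by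
        gcongr
    _ = (α - 1) ^ (α - 1) / ((α - β) ^ α * Gamma (α + 1)) * (b - a) ^ α := by
        field_simp

theorem stmt_8 (α β a b : ℝ) (hα : 1 < α) (hα2 : α ≤ 2) (hβ : 0 ≤ β)
    (hβα : β ≤ α - 1) (hab : a < b) :
    ∀ t ∈ Set.Icc a b,
      (t - a) ^ (α - 1) / Real.Gamma (α + 1) *
          (α / (α - β) * (b - a) - (t - a)) ≤
        (α - 1) ^ (α - 1) / ((α - β) ^ α * Real.Gamma (α + 1)) *
          (b - a) ^ α :=
  stmt_8_general α β a b hα hβα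
end

section
/- Let 1 < α ≤ 2, 0 ≤ β < α - 1, a < b, and q : [a,b] → ℝ continuous. Suppose u : [a,b] → ℝ is continuous, not identically zero, u(t) > 0 on (a,b), and u(t) = ∫ₐᵇ G(t,s) q(s) u(s) ds for all t ∈ [a,b], where G is the Green's function of the fractional BVP. Then ∫ₐᵇ max(q(t),0) dt > Γ(α) · ((2α-2-β)/((b-a)(α-1)))^(α-1) · ((2α-2-β)/(α-1-β))^(α-1-β). -/
noncomputable def G (a b α β t s : ℝ) : ℝ :=
  if s ≤ t then
    (1 / Real.Gamma α) *
      ((t - a) ^ (α - 1) * (b - s) ^ (α - 1 - β) / (b - a) ^ (α - 1 - β) -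
        (t - s) ^ (α - 1))
  else
    (1 / Real.Gamma α) *
      ((t - a) ^ (α - 1) * (b - s) ^ (α - 1 - β) / (b - a) ^ (α - 1 - β))

/-!
Evaluate the integral equation at a maximum point `t₀` of `u`. The kernel is nonnegative and,
off the diagonal, strictly below its diagonal value `G(s,s)` (by subadditivity of `x ↦ x^(α-1)`
for `α ≤ 2`), which weighted AM-GM bounds by the reciprocal `c⁻¹` of the Lyapunov constant.
Hence `u(t₀) ≤ ∫ G(t₀,s) q⁺(s) u(s) ds < c⁻¹ ∫ q⁺ u ≤ c⁻¹ u(t₀) ∫ q⁺`,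
the middle inequality being strict because the kernel bound is strict almost everywhere.
-/

open Real Set MeasureTheory Filter

lemma rpow_mul_rpow_le_add_rpow {p r x y : ℝ} (hp : 0 < p) (hr : 0 < r) (hx : 0 ≤ x)
    (hy : 0 ≤ y) : ((p + r) / p * x) ^ p * ((p + r) / r * y) ^ r ≤ (x + y) ^ (p + r) := by
  have hσ : 0 < p + r := add_pos hp hr
  have hx' : 0 ≤ (p + r) / p * x := by positivity
  have hy' : 0 ≤ (p + r) / r * y := by positivity
  have amgm := geom_mean_le_arith_mean2_weighted (div_pos hp hσ).le (div_pos hr hσ).le hx' hy'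
    (by field_simp)
  rw [show p / (p + r) * ((p + r) / p * x) + r / (p + r) * ((p + r) / r * y) = x + y by
    field_simp] at amgm
  calc ((p + r) / p * x) ^ p * ((p + r) / r * y) ^ r
      = (((p + r) / p * x) ^ (p / (p + r)) * ((p + r) / r * y) ^ (r / (p + r))) ^ (p + r) := by
        rw [mul_rpow (rpow_nonneg hx' _) (rpow_nonneg hy' _), ← rpow_mul hx', ← rpow_mul hy',
          div_mul_cancel₀ _ hσ.ne', div_mul_cancel₀ _ hσ.ne']
    _ ≤ (x + y) ^ (p + r) := by gcongr

theorem integral_mul_lt_const_mul_integral_of_ae_lt {μ : Measure ℝ} {f g : ℝ → ℝ} {a b K : ℝ}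
    (hab : a ≤ b) (hf : ∀ᵐ s ∂μ.restrict (Ioc a b), f s < K)
    (hg : ∀ᵐ s ∂μ.restrict (Ioc a b), 0 ≤ g s)
    (hfg : IntervalIntegrable (fun s => f s * g s) μ a b) (hgi : IntervalIntegrable g μ a b)
    (hpos : 0 < ∫ s in a..b, f s * g s ∂μ) :
    ∫ s in a..b, f s * g s ∂μ < K * ∫ s in a..b, g s ∂μ := by
  simp only [intervalIntegral.integral_of_le hab] at hpos ⊢
  have hfreq : ∃ᵐ s ∂μ.restrict (Ioc a b), f s * g s ≠ 0 :=
    frequently_ae_ne_zero_of_integral_ne_zero hpos.ne'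
  have hgap : 0 < ∫ s in Ioc a b, K * g s - f s * g s ∂μ := by
    rw [integral_pos_iff_support_of_nonneg_ae, pos_iff_ne_zero]
    · refine frequently_ae_iff.1 ((hfreq.and_eventually hf).mono fun s ⟨hfgs, hfs⟩ => ?_)
      simp only [← sub_mul]
      exact mul_ne_zero (sub_ne_zero.2 hfs.ne') (right_ne_zero_of_mul hfgs)
    · filter_upwards [hf, hg] with s hfs hgs
      simpa [← sub_mul] using mul_nonneg (sub_nonneg.2 hfs.le) hgs
    · exact (hgi.1.const_mul K).sub hfg.1
  rwa [integral_sub ((hgi.1).const_mul K) hfg.1, integral_const_mul, sub_pos] at hgap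

lemma ae_restrict_Icc_mem_Ioo_ne (a b c : ℝ) :
    ∀ᵐ s ∂volume.restrict (Icc a b), s ∈ Ioo a b ∧ s ≠ c := by
  rw [Measure.restrict_congr_set Ioo_ae_eq_Icc.symm, ae_restrict_iff' measurableSet_Ioo]
  filter_upwards [Measure.ae_ne volume c] with s hsc hs using ⟨hs, hsc⟩

theorem one_lt_mul_integral_max_of_eq_integral_kernel {k : ℝ → ℝ → ℝ} {q u : ℝ → ℝ}
    {a b C : ℝ} (hab : a < b) (hkc : ∀ t ∈ Icc a b, ContinuousOn (k t) (Icc a b))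
    (hk0 : ∀ t ∈ Icc a b, ∀ s ∈ Icc a b, 0 ≤ k t s)
    (hkC : ∀ t ∈ Icc a b, ∀ s ∈ Ioo a b, s ≠ t → k t s < C)
    (hq : ContinuousOn q (Icc a b)) (hu : ContinuousOn u (Icc a b))
    (hpos : ∀ t ∈ Ioo a b, 0 < u t)
    (heq : ∀ t ∈ Icc a b, u t = ∫ s in a..b, k t s * (q s * u s)) :
    1 < C * ∫ s in a..b, max (q s) 0 := by
  obtain ⟨t₀, ht₀, hmax⟩ := isCompact_Icc.exists_isMaxOn (nonempty_Icc.2 hab.le) hu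
  have hmid : (a + b) / 2 ∈ Ioo a b := ⟨by linarith, by linarith⟩
  have hM : 0 < u t₀ := (hpos _ hmid).trans_le (hmax (Ioo_subset_Icc_self hmid))
  have hae := ae_restrict_Icc_mem_Ioo_ne a b t₀
  have hkc₀ := hkc t₀ ht₀
  rw [← uIcc_of_le hab.le] at hq hu hkc₀
  have hqp : ContinuousOn (fun s => max (q s) 0) (uIcc a b) := hq.sup continuousOn_const
  have hg0 : ∀ᵐ s ∂volume.restrict (Icc a b), 0 ≤ max (q s) 0 * u s :=
    hae.mono fun s hs => mul_nonneg (le_max_right _ _) (hpos s hs.1).le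
  have h₁ : u t₀ ≤ ∫ s in a..b, k t₀ s * (max (q s) 0 * u s) := by
    rw [heq t₀ ht₀]
    refine intervalIntegral.integral_mono_ae_restrict hab.le
      (hkc₀.mul (hq.mul hu)).intervalIntegrable (hkc₀.mul (hqp.mul hu)).intervalIntegrable ?_
    filter_upwards [hae, ae_restrict_mem measurableSet_Icc] with s hs hsI
    exact mul_le_mul_of_nonneg_left
      (mul_le_mul_of_nonneg_right (le_max_left _ _) (hpos s hs.1).le) (hk0 t₀ ht₀ s hsI)
  have h₂ : ∫ s in a..b, k t₀ s * (max (q s) 0 * u s) < C * ∫ s in a..b, max (q s) 0 * u s := by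
    refine integral_mul_lt_const_mul_integral_of_ae_lt hab.le ?_ ?_
      (hkc₀.mul (hqp.mul hu)).intervalIntegrable (hqp.mul hu).intervalIntegrable (hM.trans_le h₁)
    · exact ae_restrict_of_ae_restrict_of_subset Ioc_subset_Icc_self
        (hae.mono fun s hs => hkC t₀ ht₀ s hs.1 hs.2)
    · exact ae_restrict_of_ae_restrict_of_subset Ioc_subset_Icc_self hg0
  have h₃ : ∫ s in a..b, max (q s) 0 * u s ≤ u t₀ * ∫ s in a..b, max (q s) 0 := by
    rw [← intervalIntegral.integral_const_mul]
    refine intervalIntegral.integral_mono_on hab.le (hqp.mul hu).intervalIntegrable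
      (continuousOn_const.mul hqp).intervalIntegrable fun s hs => ?_
    rw [mul_comm]
    exact mul_le_mul_of_nonneg_right (hmax hs) (le_max_right _ _)
  have hC : 0 ≤ C := by
    have := intervalIntegral.integral_nonneg_of_ae_restrict hab.le hg0
    nlinarith
  have := h₁.trans_lt (h₂.trans_le (mul_le_mul_of_nonneg_left h₃ hC))
  rwa [mul_left_comm, lt_mul_iff_one_lt_right hM] at this

section GreenFunction

variable {a b α β t s : ℝ}

lemma continuous_G (hα : 1 < α) (hβα : β ≤ α - 1) : Continuous (G a b α β t) := by
  have hp : 0 ≤ α - 1 := by linarith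
  have hr : 0 ≤ α - 1 - β := by linarith
  show Continuous fun s => G a b α β t s
  unfold G
  refine Continuous.if_le ?_ ?_ continuous_id continuous_const fun s hst => ?_
  · fun_prop (disch := exact fun _ => Or.inr ‹_›)
  · fun_prop (disch := exact fun _ => Or.inr ‹_›)
  · rw [hst, sub_self, zero_rpow (by linarith), sub_zero]

lemma G_self (hα : 1 < α) : G a b α β s s =
    1 / Gamma α * ((s - a) ^ (α - 1) * (b - s) ^ (α - 1 - β) / (b - a) ^ (α - 1 - β)) := by
  simp [G, zero_rpow (by linarith : α - 1 ≠ 0)]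

lemma G_nonneg (hβ : 0 ≤ β) (hβα : β ≤ α - 1) (hab : a < b) (ht : t ∈ Icc a b)
    (hs : s ∈ Icc a b) : 0 ≤ G a b α β t s := by
  have hΓ : 0 < 1 / Gamma α := one_div_pos.2 (Gamma_pos_of_pos (by linarith))
  have hta : 0 ≤ t - a := by linarith [ht.1]
  have hbs : 0 ≤ b - s := by linarith [hs.2]
  have hba : 0 < b - a := by linarith
  unfold G
  split_ifs with hst
  · refine mul_nonneg hΓ.le (sub_nonneg.2 ?_)
    have hratio : (b - s) / (b - a) ≤ 1 := div_le_one_of_le₀ (by linarith [hs.1]) hba.le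
    calc (t - s) ^ (α - 1) ≤ ((t - a) * ((b - s) / (b - a))) ^ (α - 1) := by
          refine rpow_le_rpow (sub_nonneg.2 hst) ?_ (by linarith)
          rw [← mul_div_assoc, le_div_iff₀ hba]
          nlinarith [ht.2, hs.1]
      _ = (t - a) ^ (α - 1) * ((b - s) / (b - a)) ^ (α - 1) := mul_rpow hta (by positivity)
      _ ≤ (t - a) ^ (α - 1) * ((b - s) / (b - a)) ^ (α - 1 - β) := by
          refine mul_le_mul_of_nonneg_left ?_ (rpow_nonneg hta _)
          exact rpow_le_rpow_of_exponent_ge' (by positivity) hratio (by linarith) (by linarith)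
      _ = (t - a) ^ (α - 1) * (b - s) ^ (α - 1 - β) / (b - a) ^ (α - 1 - β) := by
          rw [div_rpow hbs hba.le, mul_div_assoc]
  · positivity

lemma G_lt_G_self (hα : 1 < α) (hα2 : α ≤ 2) (hβα : β < α - 1) (ht : t ∈ Icc a b)
    (hs : s ∈ Ioo a b) (hst : s ≠ t) : G a b α β t s < G a b α β s s := by
  have hΓ : 0 < 1 / Gamma α := one_div_pos.2 (Gamma_pos_of_pos (by linarith))
  have hsa : 0 < s - a := by linarith [hs.1]
  have hbs : 0 < b - s := by linarith [hs.2]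
  have hba : 0 < b - a := by linarith [hs.1, hs.2]
  rw [G_self hα]
  unfold G
  simp only [mul_div_assoc]
  set w := (b - s) ^ (α - 1 - β) / (b - a) ^ (α - 1 - β)
  have hw0 : 0 < w := by positivity
  have hw1 : w < 1 :=
    (div_lt_one (by positivity)).2 (rpow_lt_rpow hbs.le (by linarith) (by linarith))
  split_ifs with hle
  · have hts : 0 ≤ t - s := by linarith
    have hsub := rpow_add_le_add_rpow hsa.le hts (by linarith : 0 ≤ α - 1) (by linarith)
    rw [show s - a + (t - s) = t - a by ring] at hsub
    have hmono : (s - a) ^ (α - 1) < (t - a) ^ (α - 1) :=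
      rpow_lt_rpow hsa.le (by linarith [lt_of_le_of_ne hle hst]) (by linarith)
    refine mul_lt_mul_of_pos_left ?_ hΓ
    nlinarith
  · refine mul_lt_mul_of_pos_left (mul_lt_mul_of_pos_right ?_ hw0) hΓ
    exact rpow_lt_rpow (by linarith [ht.1]) (by linarith) (by linarith)

noncomputable def lyapunovConstant (a b α β : ℝ) : ℝ :=
  Gamma α * ((2 * α - 2 - β) / ((b - a) * (α - 1))) ^ (α - 1) *
    ((2 * α - 2 - β) / (α - 1 - β)) ^ (α - 1 - β)

lemma lyapunovConstant_pos (hα : 1 < α) (hβα : β < α - 1) (hab : a < b) :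
    0 < lyapunovConstant a b α β := by
  have hσ : 0 < 2 * α - 2 - β := by linarith
  unfold lyapunovConstant
  have := Gamma_pos_of_pos (by linarith : 0 < α)
  have := rpow_pos_of_pos (div_pos hσ (mul_pos (sub_pos.2 hab) (sub_pos.2 hα))) (α - 1)
  have := rpow_pos_of_pos (div_pos hσ (sub_pos.2 hβα)) (α - 1 - β)
  positivity

lemma G_self_le_inv_lyapunovConstant (hα : 1 < α) (hβα : β < α - 1) (hab : a < b)
    (hs : s ∈ Icc a b) : G a b α β s s ≤ (lyapunovConstant a b α β)⁻¹ := by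
  have hp : 0 < α - 1 := by linarith
  have hr : 0 < α - 1 - β := by linarith
  have hσ : 0 < 2 * α - 2 - β := by linarith
  have hba : 0 < b - a := by linarith
  have hΓ := Gamma_pos_of_pos (by linarith : 0 < α)
  have key := rpow_mul_rpow_le_add_rpow hp hr (by linarith [hs.1] : 0 ≤ s - a)
    (by linarith [hs.2] : 0 ≤ b - s)
  rw [show s - a + (b - s) = b - a by ring, rpow_add hba,
    show α - 1 + (α - 1 - β) = 2 * α - 2 - β by ring,
    mul_rpow (by positivity) (by linarith [hs.1]), mul_rpow (by positivity) (by linarith [hs.2])]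
    at key
  rw [G_self hα, lyapunovConstant,
    div_mul_eq_div_div_swap,
    div_rpow (by positivity) hba.le]
  have hD := rpow_pos_of_pos hba (α - 1)
  have hE := rpow_pos_of_pos hba (α - 1 - β)
  have hP := rpow_pos_of_pos (div_pos hσ hp) (α - 1)
  have hR := rpow_pos_of_pos (div_pos hσ hr) (α - 1 - β)
  generalize (s - a) ^ (α - 1) = A, (b - s) ^ (α - 1 - β) = B, (b - a) ^ (α - 1) = D,
    (b - a) ^ (α - 1 - β) = E, ((2 * α - 2 - β) / (α - 1)) ^ (α - 1) = P,
    ((2 * α - 2 - β) / (α - 1 - β)) ^ (α - 1 - β) = R at *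
  calc 1 / Gamma α * (A * B / E) = P * A * (R * B) / (Gamma α * P * R * E) := by
        field_simp
    _ ≤ D * E / (Gamma α * P * R * E) := by gcongr
    _ = (Gamma α * (P / D) * R)⁻¹ := by field_simp

end GreenFunction

theorem stmt_10_general (α β a b : ℝ) (hα : 1 < α) (hα2 : α ≤ 2) (hβ : 0 ≤ β)
    (hβα : β < α - 1) (hab : a < b) (q u : ℝ → ℝ)
    (hq : ContinuousOn q (Set.Icc a b))
    (hu : ContinuousOn u (Set.Icc a b))
    (hpos : ∀ t ∈ Set.Ioo a b, 0 < u t)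
    (heq : ∀ t ∈ Set.Icc a b, u t = ∫ s in a..b, G a b α β t s * (q s * u s)) :
    ∫ t in a..b, max (q t) 0 >
      Real.Gamma α * ((2 * α - 2 - β) / ((b - a) * (α - 1))) ^ (α - 1) *
        ((2 * α - 2 - β) / (α - 1 - β)) ^ (α - 1 - β) := by
  have key := one_lt_mul_integral_max_of_eq_integral_kernel hab
    (fun _ _ => (continuous_G hα hβα.le).continuousOn)
    (fun _ ht _ hs => G_nonneg hβ hβα.le hab ht hs)
    (fun _ ht _ hs hst => (G_lt_G_self hα hα2 hβα ht hs hst).trans_le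
      (G_self_le_inv_lyapunovConstant hα hβα hab (Ioo_subset_Icc_self hs)))
    hq hu hpos heq
  rwa [lt_inv_mul_iff₀ (lyapunovConstant_pos hα hβα hab), mul_one] at key

theorem stmt_10 (α β a b : ℝ) (hα : 1 < α) (hα2 : α ≤ 2) (hβ : 0 ≤ β)
    (hβα : β < α - 1) (hab : a < b) (q u : ℝ → ℝ)
    (hq : ContinuousOn q (Set.Icc a b))
    (hu : ContinuousOn u (Set.Icc a b))
    (hne : ∃ t ∈ Set.Icc a b, u t ≠ 0)
    (hpos : ∀ t ∈ Set.Ioo a b, 0 < u t)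
    (heq : ∀ t ∈ Set.Icc a b, u t = ∫ s in a..b, G a b α β t s * (q s * u s)) :
    ∫ t in a..b, max (q t) 0 >
      Real.Gamma α * ((2 * α - 2 - β) / ((b - a) * (α - 1))) ^ (α - 1) *
        ((2 * α - 2 - β) / (α - 1 - β)) ^ (α - 1 - β) :=
  stmt_10_general α β a b hα hα2 hβ hβα hab q u hq hu hpos heq
end
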